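/- arXiv:1708.06065 — 2 statements merged into one kernel-verified Lean document; each statement's English description precedes it below -/
import Mathlib

section
/- Suppose A_ff is invertible, let P_ideal be the interpolation operator with F-block W := -A_ff⁻¹ * A_fc, let R₀ = [0, I] be the restriction operator with Z = 0, and suppose K := R₀*A*P_ideal is invertible. Then the residual-propagation operator of coarse-grid correction satisfies I - A*P_ideal*K⁻¹*R₀ = fromBlocks I 0 0 0; in particular A*P_ideal*K⁻¹*R₀ is a symmetric idempotent matrix, so coarse-grid correction is an ℓ²-orthogonal projection on residuals. -/
/-! Ideal interpolation makes `A P` vanish on the fine rows and equal the Schur complement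
`S = A_cc - A_cf A_ff⁻¹ A_fc` on the coarse rows, so `K = R₀ A P = S` and
`A P K⁻¹ R₀ = [0; I] [0, I] = fromBlocks 0 0 0 I`, the coordinate projection onto the coarse
variables. -/

open Matrix

theorem Matrix.fromBlocks_mul_fromRows_neg_inv_mul_one {R m n : Type*} [CommRing R]
    [Fintype m] [Fintype n] [DecidableEq m] [DecidableEq n]
    {A_ff : Matrix m m R} (A_fc : Matrix m n R) (A_cf : Matrix n m R) (A_cc : Matrix n n R)
    (hA_ff : IsUnit A_ff.det) :
    fromBlocks A_ff A_fc A_cf A_cc * fromRows (-(A_ff⁻¹ * A_fc)) (1 : Matrix n n R)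
      = fromRows 0 (A_cc - A_cf * A_ff⁻¹ * A_fc) := by
  rw [fromBlocks_mul_fromRows, Matrix.mul_neg, ← Matrix.mul_assoc, mul_nonsing_inv _ hA_ff]
  simp only [Matrix.one_mul, Matrix.mul_one, Matrix.mul_neg, neg_add_cancel, ← Matrix.mul_assoc,
    neg_add_eq_sub]

theorem residual_propagation_ideal_interpolation_Z_zero_general
    {F C : Type*} [Fintype F] [Fintype C] [DecidableEq F] [DecidableEq C]
    (A_ff : Matrix F F ℝ) (A_fc : Matrix F C ℝ) (A_cf : Matrix C F ℝ) (A_cc : Matrix C C ℝ)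
    (A : Matrix (F ⊕ C) (F ⊕ C) ℝ) (hA : A = fromBlocks A_ff A_fc A_cf A_cc)
    (hAff : IsUnit A_ff.det)
    (P_ideal : Matrix (F ⊕ C) C ℝ)
    (hP : P_ideal = fromRows (-(A_ff⁻¹ * A_fc)) (1 : Matrix C C ℝ))
    (R₀ : Matrix C (F ⊕ C) ℝ) (hR : R₀ = fromCols (0 : Matrix C F ℝ) (1 : Matrix C C ℝ))
    (K : Matrix C C ℝ) (hK : K = R₀ * A * P_ideal) (hKinv : IsUnit K.det) :
    (1 : Matrix (F ⊕ C) (F ⊕ C) ℝ) - A * P_ideal * K⁻¹ * R₀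
        = fromBlocks (1 : Matrix F F ℝ) 0 0 0 ∧
    (A * P_ideal * K⁻¹ * R₀)ᵀ = A * P_ideal * K⁻¹ * R₀ ∧
    (A * P_ideal * K⁻¹ * R₀) * (A * P_ideal * K⁻¹ * R₀) = A * P_ideal * K⁻¹ * R₀ := by
  have hAP : A * P_ideal = fromRows 0 K := by
    have hS : A * P_ideal = fromRows 0 (A_cc - A_cf * A_ff⁻¹ * A_fc) := by
      rw [hA, hP, fromBlocks_mul_fromRows_neg_inv_mul_one A_fc A_cf A_cc hAff]
    rw [hK, Matrix.mul_assoc, hS, hR, fromCols_mul_fromRows]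
    simp
  have hE : A * P_ideal * K⁻¹ * R₀ = fromBlocks 0 0 0 1 := by
    rw [Matrix.mul_assoc, hAP, hR, mul_fromCols, fromRows_mul_fromCols]
    simp [mul_nonsing_inv _ hKinv]
  rw [hE]
  refine ⟨?_, by simp [fromBlocks_transpose], by simp [fromBlocks_multiply]⟩
  rw [sub_eq_iff_eq_add, fromBlocks_add]
  simp

/-- With ideal interpolation and `Z = 0`, residual propagation of coarse-grid
correction is `fromBlocks I 0 0 0`; in particular `A P K⁻¹ R₀` is a symmetric
idempotent, i.e. an ℓ²-orthogonal projection on residuals. -/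
theorem residual_propagation_ideal_interpolation_Z_zero
    {F C : Type*} [Fintype F] [Fintype C] [DecidableEq F] [DecidableEq C]
    [Nonempty F] [Nonempty C]
    (A_ff : Matrix F F ℝ) (A_fc : Matrix F C ℝ) (A_cf : Matrix C F ℝ) (A_cc : Matrix C C ℝ)
    (A : Matrix (F ⊕ C) (F ⊕ C) ℝ) (hA : A = fromBlocks A_ff A_fc A_cf A_cc)
    (hAff : IsUnit A_ff.det)
    (P_ideal : Matrix (F ⊕ C) C ℝ)
    (hP : P_ideal = fromRows (-(A_ff⁻¹ * A_fc)) (1 : Matrix C C ℝ))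
    (R₀ : Matrix C (F ⊕ C) ℝ) (hR : R₀ = fromCols (0 : Matrix C F ℝ) (1 : Matrix C C ℝ))
    (K : Matrix C C ℝ) (hK : K = R₀ * A * P_ideal) (hKinv : IsUnit K.det) :
    (1 : Matrix (F ⊕ C) (F ⊕ C) ℝ) - A * P_ideal * K⁻¹ * R₀
        = fromBlocks (1 : Matrix F F ℝ) 0 0 0 ∧
    (A * P_ideal * K⁻¹ * R₀)ᵀ = A * P_ideal * K⁻¹ * R₀ ∧
    (A * P_ideal * K⁻¹ * R₀) * (A * P_ideal * K⁻¹ * R₀) = A * P_ideal * K⁻¹ * R₀ :=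
  residual_propagation_ideal_interpolation_Z_zero_general A_ff A_fc A_cf A_cc A hA hAff P_ideal hP
    R₀ hR K hK hKinv
end

section
/- Let Δ : Matrix F F ℝ and suppose K := R*A*P is invertible. Define Ŵ := (I - Δ*A_ff)*W - Δ*A_fc, M⁻¹ := (fromBlocks I Ŵ 0 I) * (fromBlocks Δ 0 0 K⁻¹) * (fromBlocks I 0 Z I), and G := (I - Δ*A_ff) + Δ*(A_ff*W + A_fc)*K⁻¹*(Z*A_ff + A_cf) : Matrix F F ℝ. Then for every nonzero complex number λ, λ is an eigenvalue of (the complexification of) I - M⁻¹*A if and only if λ is an eigenvalue of (the complexification of) G. -/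
/-!
Coarse-grid correction is exact on the range of `P = [W; I]`, so `E = I - M⁻¹A` vanishes on it.
Since `[I; 0] [I, -W] + [W; I] [0, I] = I`, this gives `E = X V` with `V = [I, -W]` and
`X = E [I; 0]`, and a block computation shows `V X = G`. Finally `X V` and `V X` have the same
nonzero eigenvalues, because `t^|F| χ_{XV}(t) = t^|F ⊕ C| χ_{VX}(t)`.
-/

open Matrix

open Polynomial in
theorem Matrix.mem_spectrum_mul_comm_of_ne_zero {m n K : Type*} [Fintype m] [Fintype n]
    [DecidableEq m] [DecidableEq n] [Field K] (A : Matrix m n K) (B : Matrix n m K) {r : K}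
    (hr : r ≠ 0) : r ∈ spectrum K (A * B) ↔ r ∈ spectrum K (B * A) := by
  have h := congrArg (eval r) (charpoly_mul_comm' A B)
  simp only [eval_mul, eval_pow, eval_X] at h
  rw [mem_spectrum_iff_isRoot_charpoly, mem_spectrum_iff_isRoot_charpoly, IsRoot.def, IsRoot.def,
    ← mul_eq_zero_iff_left (pow_ne_zero (Fintype.card n) hr), h,
    mul_eq_zero_iff_left (pow_ne_zero _ hr)]

theorem Matrix.eq_mul_fromCols_of_mul_fromRows_eq_zero {α F C ι : Type*} [Ring α] [Fintype F]
    [Fintype C] [DecidableEq F] [DecidableEq C] (E : Matrix ι (F ⊕ C) α) (W : Matrix F C α)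
    (hE : E * fromRows W (1 : Matrix C C α) = 0) :
    E = E * fromRows (1 : Matrix F F α) (0 : Matrix C F α) * fromCols 1 (-W) := by
  have hid : fromRows (1 : Matrix F F α) (0 : Matrix C F α) * fromCols 1 (-W)
      + fromRows W (1 : Matrix C C α) * fromCols (0 : Matrix C F α) 1 = 1 := by
    rw [fromRows_mul_fromCols, fromRows_mul_fromCols, ← fromBlocks_one, fromBlocks_add]
    simp
  conv_lhs => rw [← Matrix.mul_one E, ← hid]
  rw [Matrix.mul_add, ← Matrix.mul_assoc, ← Matrix.mul_assoc, hE, Matrix.zero_mul, add_zero]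

section TwoGrid

variable {α F C : Type*} [CommRing α] [Fintype F] [Fintype C] [DecidableEq F] [DecidableEq C]

variable (A_ff : Matrix F F α) (A_fc : Matrix F C α) (A_cf : Matrix C F α) (A_cc : Matrix C C α)
  (W : Matrix F C α) (Z : Matrix C F α) (Δ : Matrix F F α) (K : Matrix C C α)

noncomputable def twoGridMinv : Matrix (F ⊕ C) (F ⊕ C) α :=
  fromBlocks (1 : Matrix F F α) ((1 - Δ * A_ff) * W - Δ * A_fc) 0 (1 : Matrix C C α)
    * fromBlocks Δ 0 0 K⁻¹ * fromBlocks (1 : Matrix F F α) 0 Z (1 : Matrix C C α)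

omit [DecidableEq F] in
theorem fromCols_mul_fromBlocks_mul_fromRows :
    fromCols Z (1 : Matrix C C α) * fromBlocks A_ff A_fc A_cf A_cc
      * fromRows W (1 : Matrix C C α) = Z * (A_ff * W + A_fc) + (A_cf * W + A_cc) := by
  rw [fromCols_mul_fromBlocks, fromCols_mul_fromRows]
  simp only [Matrix.one_mul, Matrix.mul_one, Matrix.mul_add, Matrix.add_mul, Matrix.mul_assoc]
  abel

variable {K} in
theorem twoGridMinv_mul_fromBlocks_mul_fromRows
    (hK : K = fromCols Z (1 : Matrix C C α) * fromBlocks A_ff A_fc A_cf A_cc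
      * fromRows W (1 : Matrix C C α))
    (hKinv : IsUnit K.det) :
    twoGridMinv A_ff A_fc W Z Δ K * fromBlocks A_ff A_fc A_cf A_cc
      * fromRows W (1 : Matrix C C α) = fromRows W (1 : Matrix C C α) := by
  rw [fromCols_mul_fromBlocks_mul_fromRows] at hK
  have hL : fromBlocks (1 : Matrix F F α) 0 Z (1 : Matrix C C α)
      * (fromBlocks A_ff A_fc A_cf A_cc * fromRows W (1 : Matrix C C α))
      = fromRows (A_ff * W + A_fc) K := by
    rw [hK, fromBlocks_mul_fromRows, fromBlocks_mul_fromRows]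
    simp only [Matrix.one_mul, Matrix.zero_mul, Matrix.mul_one, add_zero]
  have hD : fromBlocks Δ 0 0 K⁻¹ * fromRows (A_ff * W + A_fc) K
      = fromRows (Δ * (A_ff * W + A_fc)) (1 : Matrix C C α) := by
    rw [fromBlocks_mul_fromRows, nonsing_inv_mul K hKinv]
    simp
  have hU : fromBlocks (1 : Matrix F F α) ((1 - Δ * A_ff) * W - Δ * A_fc) 0 (1 : Matrix C C α)
      * fromRows (Δ * (A_ff * W + A_fc)) (1 : Matrix C C α) = fromRows W (1 : Matrix C C α) := by
    rw [fromBlocks_mul_fromRows]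
    simp only [Matrix.one_mul, Matrix.mul_one, Matrix.zero_mul, zero_add, Matrix.sub_mul,
      Matrix.mul_add, Matrix.mul_assoc]
    congr 1
    abel
  rw [twoGridMinv, Matrix.mul_assoc, Matrix.mul_assoc, Matrix.mul_assoc, hL, hD, hU]

theorem fromCols_mul_one_sub_twoGridMinv_mul_mul_fromRows :
    fromCols (1 : Matrix F F α) (-W)
        * (1 - twoGridMinv A_ff A_fc W Z Δ K * fromBlocks A_ff A_fc A_cf A_cc)
        * fromRows (1 : Matrix F F α) (0 : Matrix C F α)
      = (1 - Δ * A_ff) + Δ * (A_ff * W + A_fc) * K⁻¹ * (Z * A_ff + A_cf) := by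
  have hVe : fromCols (1 : Matrix F F α) (-W) * fromRows (1 : Matrix F F α) (0 : Matrix C F α)
      = 1 := by
    simp [fromCols_mul_fromRows]
  have hVU : fromCols (1 : Matrix F F α) (-W)
      * fromBlocks (1 : Matrix F F α) ((1 - Δ * A_ff) * W - Δ * A_fc) 0 (1 : Matrix C C α)
      = fromCols 1 (-(Δ * (A_ff * W + A_fc))) := by
    rw [fromCols_mul_fromBlocks]
    simp only [Matrix.one_mul, Matrix.mul_one, Matrix.mul_zero, add_zero, Matrix.sub_mul,
      Matrix.mul_add, Matrix.mul_assoc]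
    congr 1
    abel
  have hLAe : fromBlocks (1 : Matrix F F α) 0 Z (1 : Matrix C C α)
      * (fromBlocks A_ff A_fc A_cf A_cc * fromRows (1 : Matrix F F α) (0 : Matrix C F α))
      = fromRows A_ff (Z * A_ff + A_cf) := by
    simp [fromBlocks_mul_fromRows]
  rw [twoGridMinv, Matrix.mul_sub, Matrix.sub_mul, Matrix.mul_one, hVe]
  simp only [Matrix.mul_assoc]
  rw [← Matrix.mul_assoc (fromCols _ _), hVU, hLAe, fromBlocks_mul_fromRows,
    fromCols_mul_fromRows]
  simp only [Matrix.one_mul, Matrix.zero_mul, add_zero, zero_add, Matrix.neg_mul,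
    Matrix.mul_assoc]
  abel

end TwoGrid

theorem two_grid_nonzero_eigenvalues_general
    {F C : Type*} [Fintype F] [Fintype C] [DecidableEq F] [DecidableEq C]
    (A_ff : Matrix F F ℝ) (A_fc : Matrix F C ℝ) (A_cf : Matrix C F ℝ) (A_cc : Matrix C C ℝ)
    (W : Matrix F C ℝ) (Z : Matrix C F ℝ) (Δ : Matrix F F ℝ)
    (A : Matrix (F ⊕ C) (F ⊕ C) ℝ) (hA : A = fromBlocks A_ff A_fc A_cf A_cc)
    (P : Matrix (F ⊕ C) C ℝ) (hP : P = fromRows W (1 : Matrix C C ℝ))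
    (R : Matrix C (F ⊕ C) ℝ) (hR : R = fromCols Z (1 : Matrix C C ℝ))
    (K : Matrix C C ℝ) (hK : K = R * A * P) (hKinv : IsUnit K.det)
    (What : Matrix F C ℝ) (hWhat : What = ((1 : Matrix F F ℝ) - Δ * A_ff) * W - Δ * A_fc)
    (Minv : Matrix (F ⊕ C) (F ⊕ C) ℝ)
    (hMinv : Minv = fromBlocks (1 : Matrix F F ℝ) What 0 (1 : Matrix C C ℝ)
        * fromBlocks Δ 0 0 K⁻¹
        * fromBlocks (1 : Matrix F F ℝ) 0 Z (1 : Matrix C C ℝ))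
    (G : Matrix F F ℝ)
    (hG : G = ((1 : Matrix F F ℝ) - Δ * A_ff)
        + Δ * (A_ff * W + A_fc) * K⁻¹ * (Z * A_ff + A_cf)) :
    ∀ lam : ℂ, lam ≠ 0 →
      (lam ∈ spectrum ℂ (((1 : Matrix (F ⊕ C) (F ⊕ C) ℝ) - Minv * A).map
          (algebraMap ℝ ℂ)) ↔
        lam ∈ spectrum ℂ (G.map (algebraMap ℝ ℂ))) := by
  intro lam hlam
  subst hA hP hR hWhat hG
  obtain rfl : Minv = twoGridMinv A_ff A_fc W Z Δ K := hMinv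
  set E := 1 - twoGridMinv A_ff A_fc W Z Δ K * fromBlocks A_ff A_fc A_cf A_cc
  have hEP : E * fromRows W (1 : Matrix C C ℝ) = 0 := by
    rw [Matrix.sub_mul, Matrix.one_mul,
      twoGridMinv_mul_fromBlocks_mul_fromRows A_ff A_fc A_cf A_cc W Z Δ hK hKinv, sub_self]
  rw [eq_mul_fromCols_of_mul_fromRows_eq_zero E W hEP, Matrix.map_mul,
    mem_spectrum_mul_comm_of_ne_zero _ _ hlam, ← Matrix.map_mul, ← Matrix.mul_assoc,
    fromCols_mul_one_sub_twoGridMinv_mul_mul_fromRows]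

/-- Nonzero eigenvalues (over ℂ) of the two-grid error propagator `I - M⁻¹ A`
coincide with those of `G = (I - Δ A_ff) + Δ (A_ff W + A_fc) K⁻¹ (Z A_ff + A_cf)`. -/
theorem two_grid_nonzero_eigenvalues
    {F C : Type*} [Fintype F] [Fintype C] [DecidableEq F] [DecidableEq C]
    [Nonempty F] [Nonempty C]
    (A_ff : Matrix F F ℝ) (A_fc : Matrix F C ℝ) (A_cf : Matrix C F ℝ) (A_cc : Matrix C C ℝ)
    (W : Matrix F C ℝ) (Z : Matrix C F ℝ) (Δ : Matrix F F ℝ)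
    (A : Matrix (F ⊕ C) (F ⊕ C) ℝ) (hA : A = fromBlocks A_ff A_fc A_cf A_cc)
    (P : Matrix (F ⊕ C) C ℝ) (hP : P = fromRows W (1 : Matrix C C ℝ))
    (R : Matrix C (F ⊕ C) ℝ) (hR : R = fromCols Z (1 : Matrix C C ℝ))
    (K : Matrix C C ℝ) (hK : K = R * A * P) (hKinv : IsUnit K.det)
    (What : Matrix F C ℝ) (hWhat : What = ((1 : Matrix F F ℝ) - Δ * A_ff) * W - Δ * A_fc)
    (Minv : Matrix (F ⊕ C) (F ⊕ C) ℝ)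
    (hMinv : Minv = fromBlocks (1 : Matrix F F ℝ) What 0 (1 : Matrix C C ℝ)
        * fromBlocks Δ 0 0 K⁻¹
        * fromBlocks (1 : Matrix F F ℝ) 0 Z (1 : Matrix C C ℝ))
    (G : Matrix F F ℝ)
    (hG : G = ((1 : Matrix F F ℝ) - Δ * A_ff)
        + Δ * (A_ff * W + A_fc) * K⁻¹ * (Z * A_ff + A_cf)) :
    ∀ lam : ℂ, lam ≠ 0 →
      (lam ∈ spectrum ℂ (((1 : Matrix (F ⊕ C) (F ⊕ C) ℝ) - Minv * A).map
          (algebraMap ℝ ℂ)) ↔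
        lam ∈ spectrum ℂ (G.map (algebraMap ℝ ℂ))) :=
  two_grid_nonzero_eigenvalues_general A_ff A_fc A_cf A_cc W Z Δ A hA P hP R hR K hK hKinv What
    hWhat Minv hMinv G hG
end
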